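/- arXiv:2108.01230 — 7 statements merged into one kernel-verified Lean document; each statement's English description precedes it below -/
import Mathlib

section
/- Let A be a unital C*-algebra and let V₀, V₁ ∈ A be self-adjoint unitaries such that V₁ − V₀ is invertible in A. Then the relative Cayley transform C := V₀(V₁+V₀)(V₁−V₀)⁻¹ is self-adjoint: C* = C. -/
/-- The relative Cayley transform `C = V₀(V₁+V₀)(V₁−V₀)⁻¹` of a pair of
self-adjoint unitaries `V₀, V₁` in a unital C*-algebra with `V₁ − V₀` invertible
is self-adjoint. -/
theorem relative_cayley_transform_selfAdjoint {A : Type*} [CStarAlgebra A]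
    (V₀ V₁ : A) (hV₀sa : star V₀ = V₀) (hV₀sq : V₀ ^ 2 = 1)
    (hV₁sa : star V₁ = V₁) (hV₁sq : V₁ ^ 2 = 1)
    (hinv : IsUnit (V₁ - V₀))
    (C : A) (hC : C = V₀ * (V₁ + V₀) * Ring.inverse (V₁ - V₀)) :
    star C = C := by
  obtain ⟨u, hu⟩ := hinv
  have h0 : V₀ * V₀ = 1 := by rw [← sq]; exact hV₀sq
  have h1 : V₁ * V₁ = 1 := by rw [← sq]; exact hV₁sq
  have key : (V₁ + V₀) * V₀ * (V₁ - V₀) = (V₁ - V₀) * (V₀ * (V₁ + V₀)) := by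
    have h0' : ∀ x : A, V₀ * (V₀ * x) = x := fun x => by rw [← mul_assoc, h0, one_mul]
    have h1' : ∀ x : A, V₁ * (V₁ * x) = x := fun x => by rw [← mul_assoc, h1, one_mul]
    simp only [mul_add, add_mul, sub_mul, mul_sub, mul_assoc, h0, h1, h0', h1', mul_one, one_mul]
    abel
  have hsa : star (V₁ - V₀) = V₁ - V₀ := by rw [star_sub, hV₀sa, hV₁sa]
  have hinv' : Ring.inverse (V₁ - V₀) = (↑u⁻¹ : A) := by
    rw [← hu, Ring.inverse_unit]
  have key2 : (↑u⁻¹ : A) * ((V₁ + V₀) * V₀) = V₀ * (V₁ + V₀) * ↑u⁻¹ := by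
    rw [← hu] at key
    calc (↑u⁻¹ : A) * ((V₁ + V₀) * V₀)
        = ↑u⁻¹ * ((V₁ + V₀) * V₀ * ↑u * ↑u⁻¹) := by
          rw [mul_assoc ((V₁ + V₀) * V₀), u.mul_inv, mul_one]
      _ = ↑u⁻¹ * (↑u * (V₀ * (V₁ + V₀)) * ↑u⁻¹) := by rw [key]
      _ = V₀ * (V₁ + V₀) * ↑u⁻¹ := by
          rw [mul_assoc (↑u : A), ← mul_assoc (↑u⁻¹ : A), u.inv_mul, one_mul]
  rw [hC, star_mul, star_mul, ← Ring.inverse_star, hsa, hV₀sa, star_add, hV₀sa, hV₁sa,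
    hinv', mul_assoc, ← mul_assoc V₀]
  exact key2
end

section
/- Let A be a unital C*-algebra and let V₀, V₁ ∈ A be self-adjoint unitaries such that V₁ − V₀ is invertible in A. Define F := ½·V₀(V₁V₀+1)(V₁V₀−1)⁻¹·s, where s is the positive square root of 2 − V₀V₁ − V₁V₀. Then F is self-adjoint (F* = F), anti-commutes with V₀ (V₀F = −FV₀), and satisfies ‖F‖ ≤ 1. -/
/-!
Put `u = V₁V₀`, a unitary with `u - 1 = (V₁ - V₀)V₀` invertible, and let `c = (u + 1)(u - 1)⁻¹`
be its Cayley transform, so that `F = ½ V₀ c s`. Since `V₀ u V₀ = u⋆`, conjugation by `V₀` maps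
`c` to `c⋆ = -c`; and `s`, a function of `2 - V₀V₁ - V₁V₀`, which commutes with `V₀` and `V₁`,
commutes with `V₀`, `u` and `c`. This gives `F⋆ = F` and `V₀F = -FV₀`. Finally
`s² = (u - 1)⋆(u - 1)`, whence `(cs)⋆(cs) = (u + 1)⋆(u + 1)` and `‖F‖ = ½‖u + 1‖ ≤ 1`.
-/

theorem Commute.ringInverse_right {M₀ : Type*} [MonoidWithZero M₀] {a b : M₀}
    (h : Commute a b) : Commute a (Ring.inverse b) := by
  by_cases hb : IsUnit b
  · rw [Ring.inverse_of_isUnit hb]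
    exact Commute.units_inv_right (u := hb.unit) h
  · rw [Ring.inverse_non_unit b hb]
    exact Commute.zero_right a

section Ring

variable {R : Type*} [Ring R]

noncomputable def cayley (u : R) : R := (u + 1) * Ring.inverse (u - 1)

theorem cayley_mul_sub_one {u : R} (hu : IsUnit (u - 1)) : cayley u * (u - 1) = u + 1 :=
  Ring.inverse_mul_cancel_right _ _ hu

theorem Commute.cayley_right {a u : R} (h : Commute a u) : Commute a (cayley u) :=
  (h.add_right (.one_right a)).mul_right (h.sub_right (.one_right a)).ringInverse_right

theorem SemiconjBy.cayley {a x y : R} (h : SemiconjBy a x y) (hx : IsUnit (x - 1))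
    (hy : IsUnit (y - 1)) : SemiconjBy a (_root_.cayley x) (_root_.cayley y) := by
  refine hx.mul_left_inj.mp ?_
  calc a * _root_.cayley x * (x - 1) = (y + 1) * a := by
        rw [mul_assoc, cayley_mul_sub_one hx]; exact h.add_right (.one_right a)
    _ = _root_.cayley y * a * (x - 1) := by
        rw [mul_assoc, (h.sub_right (.one_right a)).eq, ← mul_assoc, cayley_mul_sub_one hy]

theorem commute_two_sub_mul_sub_mul {V W : R} (hV : V * V = 1) :
    Commute V (2 - V * W - W * V) := by
  simp only [Commute, SemiconjBy, mul_sub, sub_mul, ← mul_assoc, hV, one_mul]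
  rw [mul_assoc W, hV, mul_one]
  noncomm_ring

end Ring

section StarRing

variable {R : Type*} [Ring R] [StarRing R]

theorem star_cayley (u : R) : star (cayley u) = cayley (star u) := by
  rw [cayley, cayley, star_mul, ← Ring.inverse_star, star_sub, star_add, star_one]
  have h : Commute (star u + 1) (star u - 1) :=
    ((Commute.refl _).add_left (.one_left _)).sub_right (.one_right _)
  exact h.ringInverse_right.eq.symm

theorem cayley_star_of_mem_unitary {u : R} (hu : u ∈ unitary R) (h : IsUnit (u - 1)) :
    cayley (star u) = -cayley u := by
  have h' : IsUnit (star u - 1) := by simpa using h.star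
  have hc : Commute (star u) (cayley u) :=
    (isStarNormal_of_mem_unitary hu).star_comm_self.cayley_right
  refine h'.mul_left_inj.mp ?_
  calc cayley (star u) * (star u - 1) = star u * (cayley u * (u - 1)) := by
        rw [cayley_mul_sub_one h', cayley_mul_sub_one h, mul_add,
          Unitary.star_mul_self_of_mem hu, mul_one, add_comm]
    _ = -cayley u * (star u - 1) := by
        rw [← mul_assoc, hc.eq, mul_assoc, mul_sub, Unitary.star_mul_self_of_mem hu]
        noncomm_ring

theorem IsSelfAdjoint.mem_unitary {V : R} (hV : IsSelfAdjoint V) (h : V * V = 1) :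
    V ∈ unitary R :=
  Unitary.mem_iff.mpr ⟨by rw [hV.star_eq, h], by rw [hV.star_eq, h]⟩

theorem two_sub_mul_sub_mul_eq_star_mul_self {V W : R} (hV : IsSelfAdjoint V)
    (hW : IsSelfAdjoint W) (hVV : V * V = 1) (hWW : W * W = 1) :
    2 - V * W - W * V = star (W * V - 1) * (W * V - 1) := by
  rw [star_sub, star_mul, hV.star_eq, hW.star_eq, star_one]
  calc 2 - V * W - W * V = V * (W * W) * V - V * W - W * V + 1 := by
        rw [hWW, mul_one, hVV, ← one_add_one_eq_two]; abel
    _ = (V * W - 1) * (W * V - 1) := by noncomm_ring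

theorem SemiconjBy.cayley_star {V u : R} (hVu : SemiconjBy V u (star u)) (h : IsUnit (u - 1)) :
    SemiconjBy V (_root_.cayley u) (star (_root_.cayley u)) :=
  star_cayley u ▸ hVu.cayley h (by simpa using h.star)

theorem isSelfAdjoint_mul_cayley_mul {V u s : R} (hV : IsSelfAdjoint V)
    (hVu : SemiconjBy V u (star u)) (h : IsUnit (u - 1)) (hs : IsSelfAdjoint s)
    (hsV : Commute s V) (hsu : Commute s u) : IsSelfAdjoint (V * cayley u * s) := by
  rw [IsSelfAdjoint, star_mul, star_mul, hV.star_eq, hs.star_eq, ← (hVu.cayley_star h).eq,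
    ← mul_assoc, hsV.eq, mul_assoc, hsu.cayley_right.eq, mul_assoc]

theorem mul_cayley_mul_anticomm {V u s : R} (hVV : V * V = 1) (hu : u ∈ unitary R)
    (hVu : SemiconjBy V u (star u)) (h : IsUnit (u - 1)) (hsV : Commute s V) :
    V * (V * cayley u * s) = -(V * cayley u * s * V) := by
  have hVc : V * cayley u = -cayley u * V := by
    rw [(hVu.cayley_star h).eq, star_cayley, cayley_star_of_mem_unitary hu h]
  calc V * (V * cayley u * s) = cayley u * s := by rw [← mul_assoc, ← mul_assoc, hVV, one_mul]
    _ = -(V * cayley u * s * V) := by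
      rw [mul_assoc (V * cayley u) s V, hsV.eq, ← mul_assoc, hVc, neg_mul, neg_mul, neg_mul,
        neg_neg, mul_assoc (cayley u) V V, hVV, mul_one]

end StarRing

section CStarRing

variable {A : Type*} [NormedRing A] [StarRing A] [CStarRing A]

theorem norm_cayley_mul_eq_norm_add_one {u s : A} [IsStarNormal u] (h : IsUnit (u - 1))
    (hs : IsSelfAdjoint s) (hsu : Commute s u) (hss : s * s = star (u - 1) * (u - 1)) :
    ‖cayley u * s‖ = ‖u + 1‖ := by
  have h' : IsUnit (star u - 1) := by simpa using h.star
  have hsu' : Commute s (star u) := hs.star_eq ▸ hsu.star_star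
  have hcu : Commute (cayley u) (star u - 1) :=
    ((IsStarNormal.star_comm_self (x := u)).symm.sub_right (.one_right u)).symm.cayley_right.symm
  have key : star (cayley u * s) * (cayley u * s) = star (u + 1) * (u + 1) :=
    calc star (cayley u * s) * (cayley u * s)
        = cayley (star u) * cayley u * (s * s) := by
          rw [star_mul, hs.star_eq, star_cayley, hsu'.cayley_right.eq, mul_assoc, ← mul_assoc s,
            hsu.cayley_right.eq]
          simp only [mul_assoc]
      _ = (cayley (star u) * (star u - 1)) * (cayley u * (u - 1)) := by
          rw [hss, star_sub, star_one, mul_assoc, ← mul_assoc (cayley u), hcu.eq]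
          simp only [mul_assoc]
      _ = star (u + 1) * (u + 1) := by
          rw [cayley_mul_sub_one h, cayley_mul_sub_one h', star_add, star_one]
  rw [← mul_self_inj (norm_nonneg _) (norm_nonneg _), ← CStarRing.norm_star_mul_self,
    ← CStarRing.norm_star_mul_self, key]

theorem norm_add_one_le_two_of_mem_unitary {u : A} (hu : u ∈ unitary A) : ‖u + 1‖ ≤ 2 := by
  nontriviality A
  calc ‖u + 1‖ ≤ ‖u‖ + ‖(1 : A)‖ := norm_add_le _ _
    _ = 2 := by rw [CStarRing.norm_of_mem_unitary hu, norm_one]; norm_num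

end CStarRing

/-- For self-adjoint unitaries `V₀, V₁` with `V₁ − V₀` invertible, the
bounded transform `F = ½ V₀(V₁V₀+1)(V₁V₀−1)⁻¹ s`, where `s` is the positive square root
of `2 − V₀V₁ − V₁V₀`, is self-adjoint, anti-commutes with `V₀`, and has norm at most 1. -/
theorem bounded_transform_selfAdjoint_norm {A : Type*} [CStarAlgebra A] [PartialOrder A]
    [StarOrderedRing A]
    (V₀ V₁ : A) (hV₀sa : star V₀ = V₀) (hV₀sq : V₀ ^ 2 = 1)
    (hV₁sa : star V₁ = V₁) (hV₁sq : V₁ ^ 2 = 1)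
    (hinv : IsUnit (V₁ - V₀))
    (s : A) (hs : s = CFC.sqrt (2 - V₀ * V₁ - V₁ * V₀))
    (F : A) (hF : F = (1 / 2 : ℂ) • (V₀ * (V₁ * V₀ + 1) * Ring.inverse (V₁ * V₀ - 1) * s)) :
    star F = F ∧ V₀ * F = -(F * V₀) ∧ ‖F‖ ≤ 1 := by
  have hV₀ : V₀ * V₀ = 1 := by rw [← sq, hV₀sq]
  have hV₁ : V₁ * V₁ = 1 := by rw [← sq, hV₁sq]
  have hV₀u : V₀ ∈ unitary A := IsSelfAdjoint.mem_unitary hV₀sa hV₀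
  set u := V₁ * V₀
  have hu : u ∈ unitary A := mul_mem (IsSelfAdjoint.mem_unitary hV₁sa hV₁) hV₀u
  have hu1 : IsUnit (u - 1) := by
    rw [show u - 1 = (V₁ - V₀) * V₀ by rw [sub_mul, hV₀]]
    exact hinv.mul (Unitary.isUnit_coe (U := ⟨V₀, hV₀u⟩))
  have hVu : SemiconjBy V₀ u (star u) := by
    rw [star_mul, hV₀sa, hV₁sa]; exact (mul_assoc V₀ V₁ V₀).symm
  have hs_sa : IsSelfAdjoint s := hs ▸ (CFC.sqrt_nonneg _).isSelfAdjoint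
  have hss : s * s = star (u - 1) * (u - 1) := by
    rw [hs, two_sub_mul_sub_mul_eq_star_mul_self hV₀sa hV₁sa hV₀ hV₁,
      CFC.sqrt_mul_sqrt_self _ (star_mul_self_nonneg _)]
  have hsV₀ : Commute s V₀ := hs ▸ (commute_two_sub_mul_sub_mul hV₀).symm.cfcₙ_nnreal _
  have hsV₁ : Commute s V₁ := by
    rw [hs, sub_right_comm]; exact (commute_two_sub_mul_sub_mul hV₁).symm.cfcₙ_nnreal _
  have hsu : Commute s u := hsV₁.mul_right hsV₀
  obtain rfl : F = (1 / 2 : ℂ) • (V₀ * cayley u * s) := by rw [hF, cayley, mul_assoc V₀]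
  refine ⟨?_, ?_, ?_⟩
  · exact IsSelfAdjoint.smul (by simp [IsSelfAdjoint])
      (isSelfAdjoint_mul_cayley_mul hV₀sa hVu hu1 hs_sa hsV₀ hsu)
  · rw [mul_smul_comm, smul_mul_assoc, mul_cayley_mul_anticomm hV₀ hu hVu hu1 hsV₀, smul_neg]
  · have := isStarNormal_of_mem_unitary hu
    rw [norm_smul, mul_assoc, CStarRing.norm_mem_unitary_mul _ hV₀u,
      norm_cayley_mul_eq_norm_add_one hu1 hs_sa hsu hss, norm_div, norm_one, Complex.norm_two]
    linarith [norm_add_one_le_two_of_mem_unitary hu]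
end

section
/- Let A be a unital C*-algebra and let J₀, J₁ ∈ A be skew-adjoint unitaries such that J₁ − J₀ is invertible in A. Then the relative Cayley transform C := J₀(J₁+J₀)(J₁−J₀)⁻¹ is skew-adjoint (C* = −C) and anti-commutes with J₀ (J₀C = −CJ₀); moreover, every skew-adjoint unitary κ ∈ A with κJ₀ = −J₀κ and κJ₁ = −J₁κ satisfies κC = −Cκ. -/
/-- For skew-adjoint unitaries `J₀, J₁` in a unital C*-algebra with
`J₁ − J₀` invertible, the relative Cayley transform `C = J₀(J₁+J₀)(J₁−J₀)⁻¹` is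
skew-adjoint, anti-commutes with `J₀`, and anti-commutes with every skew-adjoint
unitary `κ` anti-commuting with both `J₀` and `J₁`. -/
theorem skew_relative_cayley_transform {A : Type*} [CStarAlgebra A]
    (J₀ J₁ : A) (hJ₀sa : star J₀ = -J₀) (hJ₀sq : J₀ ^ 2 = -1)
    (hJ₁sa : star J₁ = -J₁) (hJ₁sq : J₁ ^ 2 = -1)
    (hinv : IsUnit (J₁ - J₀))
    (C : A) (hC : C = J₀ * (J₁ + J₀) * Ring.inverse (J₁ - J₀)) :
    star C = -C ∧ J₀ * C = -(C * J₀) ∧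
      ∀ κ : A, star κ = -κ → κ ^ 2 = -1 → κ * J₀ = -(J₀ * κ) → κ * J₁ = -(J₁ * κ) →
        κ * C = -(C * κ) := by
  set V : A := Ring.inverse (J₁ - J₀) with hV
  have hD1 : (J₁ - J₀) * V = 1 := Ring.mul_inverse_cancel _ hinv
  have hD2 : V * (J₁ - J₀) = 1 := Ring.inverse_mul_cancel _ hinv
  have hJ₀J₀ : J₀ * J₀ = -1 := by rw [← sq, hJ₀sq]
  have hJ₁J₁ : J₁ * J₁ = -1 := by rw [← sq, hJ₁sq]
  -- simplified form of C:  C = J₀ - (V + V)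
  have hC' : C = J₀ - (V + V) := by
    have h1 : J₀ * (J₁ + J₀) = J₀ * (J₁ - J₀) + J₀ * J₀ + J₀ * J₀ := by noncomm_ring
    calc C = (J₀ * (J₁ - J₀) + J₀ * J₀ + J₀ * J₀) * V := by rw [hC, h1]
      _ = J₀ * ((J₁ - J₀) * V) + (J₀ * J₀) * V + (J₀ * J₀) * V := by
          rw [add_mul, add_mul, mul_assoc]
      _ = J₀ - (V + V) := by rw [hD1, mul_one, hJ₀J₀]; noncomm_ring
  -- star V = -V
  have hVstar : star V = -V := by
    have h2 : star V * (J₁ - J₀) = -1 := by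
      have h3 := congrArg star hD1
      rw [star_mul, star_one, star_sub, hJ₁sa, hJ₀sa] at h3
      have h4 : -J₁ - -J₀ = -(J₁ - J₀) := by noncomm_ring
      rw [h4, mul_neg] at h3
      exact neg_eq_iff_eq_neg.mp (by rw [h3])
    calc star V = star V * ((J₁ - J₀) * V) := by rw [hD1, mul_one]
      _ = (star V * (J₁ - J₀)) * V := by rw [mul_assoc]
      _ = -V := by rw [h2, neg_one_mul]
  -- anti-commutation relation for V :  J₀ V + V J₀ = -1
  have hkey : (J₁ - J₀) * J₀ + J₀ * (J₁ - J₀) = -((J₁ - J₀) * (J₁ - J₀)) := by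
    simp only [mul_sub, sub_mul, hJ₀J₀, hJ₁J₁]
    noncomm_ring
  have e2 : V * ((J₁ - J₀) * J₀) * V = J₀ * V := by
    rw [← mul_assoc, hD2, one_mul]
  have e3 : V * (J₀ * (J₁ - J₀)) * V = V * J₀ := by
    rw [← mul_assoc V J₀, mul_assoc, hD1, mul_one]
  have hJ₀V : J₀ * V + V * J₀ = -1 := by
    calc J₀ * V + V * J₀
        = V * ((J₁ - J₀) * J₀) * V + V * (J₀ * (J₁ - J₀)) * V := by rw [e2, e3]
      _ = V * ((J₁ - J₀) * J₀ + J₀ * (J₁ - J₀)) * V := by rw [mul_add, add_mul]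
      _ = V * (-((J₁ - J₀) * (J₁ - J₀))) * V := by rw [hkey]
      _ = -1 := by
          rw [mul_neg, neg_mul, ← mul_assoc V, mul_assoc (V * (J₁ - J₀)), hD2, hD1, one_mul]
  refine ⟨?_, ?_, ?_⟩
  · -- star C = -C
    rw [hC', star_sub, star_add, hJ₀sa, hVstar]
    noncomm_ring
  · -- J₀ * C = -(C * J₀)
    have h5 : J₀ * V = -1 - V * J₀ := by rw [← hJ₀V]; noncomm_ring
    rw [hC', mul_sub, sub_mul, mul_add, add_mul, hJ₀J₀, h5]
    noncomm_ring
  · -- κ case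
    intro κ hκsa hκsq hκJ₀ hκJ₁
    have hκD : κ * (J₁ - J₀) = -((J₁ - J₀) * κ) := by
      rw [mul_sub, sub_mul, hκJ₀, hκJ₁]; noncomm_ring
    have hDκ : (J₁ - J₀) * κ = -(κ * (J₁ - J₀)) := by rw [hκD, neg_neg]
    have hκV : κ * V = -(V * κ) := by
      calc κ * V = V * ((J₁ - J₀) * κ) * V := by rw [← mul_assoc V, hD2, one_mul]
        _ = V * (-(κ * (J₁ - J₀))) * V := by rw [hDκ]
        _ = -(V * κ * ((J₁ - J₀) * V)) := by
            rw [mul_neg, neg_mul, ← mul_assoc V κ, mul_assoc (V * κ)]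
        _ = -(V * κ) := by rw [hD1, mul_one]
    rw [hC', mul_sub, sub_mul, mul_add, add_mul, hκJ₀, hκV]
    noncomm_ring
end

section
/- Let A be a unital C*-algebra and let J₀, J₁ ∈ A be skew-adjoint unitaries such that J₁ − J₀ is invertible in A. Define F := ½·J₀(J₁J₀−1)(J₁J₀+1)⁻¹·s, where s is the positive square root of 2 + J₁J₀ + J₀J₁. Then F² = ¼·(−2 + J₁J₀ + J₀J₁) and 1 + F² = −¼·(J₀−J₁)²; moreover every skew-adjoint unitary κ ∈ A with κJ₀ = −J₀κ and κJ₁ = −J₁κ satisfies κF = −Fκ. -/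
lemma unitary_conj_sqrt_comm {A : Type*} [CStarAlgebra A] [PartialOrder A] [StarOrderedRing A]
    (v c : A) (h1 : star v * v = 1) (h2 : v * star v = 1) (hc : 0 ≤ c)
    (hcomm : v * c = c * v) : v * CFC.sqrt c = CFC.sqrt c * v := by
  let φ : A →⋆ₐ[NNReal] A :=
  { toFun := fun x => v * x * star v
    map_one' := by show v * 1 * star v = 1; rw [mul_one, h2]
    map_mul' := fun x y => by
      show v * (x * y) * star v = (v * x * star v) * (v * y * star v)
      calc v * (x * y) * star v = v * x * (star v * v) * y * star v := by
            rw [h1]; noncomm_ring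
        _ = (v * x * star v) * (v * y * star v) := by noncomm_ring
    map_zero' := by simp
    map_add' := fun x y => by
      show v * (x + y) * star v = v * x * star v + v * y * star v
      noncomm_ring
    commutes' := fun r => by
      show v * (algebraMap NNReal A r) * star v = algebraMap NNReal A r
      rw [Algebra.algebraMap_eq_smul_one, mul_smul_comm, mul_one, smul_mul_assoc, h2]
    map_star' := fun x => by
      show v * star x * star v = star (v * x * star v)
      simp [star_mul, mul_assoc] }
  have hcontφ : Continuous φ := by
    show Continuous fun x => v * x * star v
    fun_prop
  have hφc : φ c = c := by
    show v * c * star v = c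
    rw [hcomm, mul_assoc, h2, mul_one]
  have hφ : φ (CFC.sqrt c) = CFC.sqrt (φ c) := by
    rw [CFC.sqrt_eq_cfc, CFC.sqrt_eq_cfc]
    exact φ.map_cfc NNReal.sqrt c
  rw [hφc] at hφ
  have : v * CFC.sqrt c * star v = CFC.sqrt c := hφ
  calc v * CFC.sqrt c = v * CFC.sqrt c * (star v * v) := by rw [h1, mul_one]
    _ = (v * CFC.sqrt c * star v) * v := by noncomm_ring
    _ = CFC.sqrt c * v := by rw [this]

lemma comm_ring_inverse {A : Type*} [Ring A] {x y : A} (h : x * y = y * x) (hy : IsUnit y) :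
    x * Ring.inverse y = Ring.inverse y * x := by
  have h1 := Ring.mul_inverse_cancel y hy
  have h2 := Ring.inverse_mul_cancel y hy
  calc x * Ring.inverse y = Ring.inverse y * (y * x) * Ring.inverse y := by
        rw [← mul_assoc, h2, one_mul]
    _ = Ring.inverse y * (x * y) * Ring.inverse y := by rw [h]
    _ = Ring.inverse y * x * (y * Ring.inverse y) := by
        rw [← mul_assoc, mul_assoc (Ring.inverse y * x)]
    _ = Ring.inverse y * x := by rw [h1, mul_one]

/-- For skew-adjoint unitaries `J₀, J₁` with `J₁ − J₀` invertible, the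
bounded transform `F = ½ J₀(J₁J₀−1)(J₁J₀+1)⁻¹ s`, where `s` is the positive square root
of `2 + J₁J₀ + J₀J₁`, satisfies `F² = ¼(−2 + J₁J₀ + J₀J₁)`, `1 + F² = −¼(J₀−J₁)²`, and
anti-commutes with every skew-adjoint unitary `κ` anti-commuting with `J₀` and `J₁`. -/
theorem skew_bounded_transform {A : Type*} [CStarAlgebra A] [PartialOrder A]
    [StarOrderedRing A]
    (J₀ J₁ : A) (hJ₀sa : star J₀ = -J₀) (hJ₀sq : J₀ ^ 2 = -1)
    (hJ₁sa : star J₁ = -J₁) (hJ₁sq : J₁ ^ 2 = -1)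
    (hinv : IsUnit (J₁ - J₀))
    (s : A) (hs : s = CFC.sqrt (2 + J₁ * J₀ + J₀ * J₁))
    (F : A) (hF : F = (1 / 2 : ℂ) • (J₀ * (J₁ * J₀ - 1) * Ring.inverse (J₁ * J₀ + 1) * s)) :
    F ^ 2 = (1 / 4 : ℂ) • (-2 + J₁ * J₀ + J₀ * J₁) ∧
      1 + F ^ 2 = -((1 / 4 : ℂ) • (J₀ - J₁) ^ 2) ∧
      ∀ κ : A, star κ = -κ → κ ^ 2 = -1 → κ * J₀ = -(J₀ * κ) → κ * J₁ = -(J₁ * κ) →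
        κ * F = -(F * κ) := by
  have hJ₀J₀ : J₀ * J₀ = -1 := by rw [← sq]; exact hJ₀sq
  have hJ₁J₁ : J₁ * J₁ = -1 := by rw [← sq]; exact hJ₁sq
  have hJ₀J₀' : ∀ x : A, J₀ * (J₀ * x) = -x := fun x => by
    rw [← mul_assoc, hJ₀J₀, neg_one_mul]
  have hJ₁J₁' : ∀ x : A, J₁ * (J₁ * x) = -x := fun x => by
    rw [← mul_assoc, hJ₁J₁, neg_one_mul]
  have hone : (2 : A) = 1 + 1 := by norm_num
  -- units
  have hUJ₀ : IsUnit J₀ :=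
    ⟨⟨J₀, -J₀, by rw [mul_neg, hJ₀J₀, neg_neg], by rw [neg_mul, hJ₀J₀, neg_neg]⟩, rfl⟩
  have hu1eq : (J₁ - J₀) * J₀ = J₁ * J₀ + 1 := by
    noncomm_ring [hJ₀J₀, hJ₁J₁]
  have hUu1 : IsUnit (J₁ * J₀ + 1) := hu1eq ▸ hinv.mul hUJ₀
  have hw1eq : J₀ * (J₁ - J₀) = J₀ * J₁ + 1 := by
    noncomm_ring [hJ₀J₀, hJ₀J₀', hJ₁J₁]
  have hUw1 : IsUnit (J₀ * J₁ + 1) := hw1eq ▸ hUJ₀.mul hinv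
  set r : A := Ring.inverse (J₁ * J₀ + 1) with hrdef
  set r' : A := Ring.inverse (J₀ * J₁ + 1) with hr'def
  have hru1 : r * (J₁ * J₀ + 1) = 1 := Ring.inverse_mul_cancel _ hUu1
  have hu1r : (J₁ * J₀ + 1) * r = 1 := Ring.mul_inverse_cancel _ hUu1
  have hr'w1 : r' * (J₀ * J₁ + 1) = 1 := Ring.inverse_mul_cancel _ hUw1
  have hw1r' : (J₀ * J₁ + 1) * r' = 1 := Ring.mul_inverse_cancel _ hUw1
  -- positivity of c = 2 + J₁J₀ + J₀J₁ and s² = c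
  have hc0 : (0 : A) ≤ 2 + J₁ * J₀ + J₀ * J₁ := by
    have h : star (J₀ - J₁) * (J₀ - J₁) = 2 + J₁ * J₀ + J₀ * J₁ := by
      rw [star_sub, hJ₀sa, hJ₁sa]
      noncomm_ring [hJ₀J₀, hJ₁J₁, hone]
    exact h ▸ star_mul_self_nonneg _
  have hs2 : s * s = 2 + J₁ * J₀ + J₀ * J₁ := by
    rw [hs]; exact CFC.sqrt_mul_sqrt_self _ hc0
  -- commutations with s
  have hJ₀c : J₀ * (2 + J₁ * J₀ + J₀ * J₁) = (2 + J₁ * J₀ + J₀ * J₁) * J₀ := by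
    noncomm_ring [hJ₀J₀, hJ₀J₀']
  have hJ₀s : J₀ * s = s * J₀ := by
    rw [hs]
    exact unitary_conj_sqrt_comm J₀ _ (by rw [hJ₀sa, neg_mul, hJ₀J₀, neg_neg])
      (by rw [hJ₀sa, mul_neg, hJ₀J₀, neg_neg]) hc0 hJ₀c
  have huc : (J₁ * J₀) * (2 + J₁ * J₀ + J₀ * J₁) = (2 + J₁ * J₀ + J₀ * J₁) * (J₁ * J₀) := by
    noncomm_ring [hJ₀J₀, hJ₀J₀', hJ₁J₁, hJ₁J₁']
  have hus : (J₁ * J₀) * s = s * (J₁ * J₀) := by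
    rw [hs]
    refine unitary_conj_sqrt_comm (J₁ * J₀) _ ?_ ?_ hc0 huc
    · rw [star_mul, hJ₀sa, hJ₁sa]
      noncomm_ring [hJ₀J₀, hJ₀J₀', hJ₁J₁, hJ₁J₁']
    · rw [star_mul, hJ₀sa, hJ₁sa]
      noncomm_ring [hJ₀J₀, hJ₀J₀', hJ₁J₁, hJ₁J₁']
  have hsu1 : s * (J₁ * J₀ - 1) = (J₁ * J₀ - 1) * s := by
    rw [mul_sub, sub_mul, mul_one, one_mul, hus]
  have hsr : s * r = r * s := by
    refine comm_ring_inverse ?_ hUu1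
    rw [mul_add, add_mul, mul_one, one_mul, hus]
  -- exchange of r and J₀
  have hkey : J₀ * (J₀ * J₁ + 1) = (J₁ * J₀ + 1) * J₀ := by
    noncomm_ring [hJ₀J₀, hJ₀J₀']
  have hrJ₀ : r * J₀ = J₀ * r' := by
    calc r * J₀ = r * (J₀ * ((J₀ * J₁ + 1) * r')) := by rw [hw1r', mul_one]
      _ = r * ((J₀ * (J₀ * J₁ + 1)) * r') := by noncomm_ring
      _ = r * (((J₁ * J₀ + 1) * J₀) * r') := by rw [hkey]
      _ = (r * (J₁ * J₀ + 1)) * (J₀ * r') := by noncomm_ring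
      _ = J₀ * r' := by rw [hru1, one_mul]
  have hu1J₀ : (J₁ * J₀ - 1) * J₀ = J₀ * (J₀ * J₁ - 1) := by
    noncomm_ring [hJ₀J₀, hJ₀J₀']
  have hr'u : r' * (J₁ * J₀ - 1) = (J₁ * J₀ - 1) * r' := by
    refine (comm_ring_inverse ?_ hUw1).symm
    noncomm_ring [hJ₀J₀, hJ₀J₀', hJ₁J₁, hJ₁J₁']
  -- the key computation
  have hcfact : (2 : A) + J₁ * J₀ + J₀ * J₁ = (J₁ * J₀ + 1) * (J₀ * J₁ + 1) := by
    noncomm_ring [hJ₀J₀, hJ₀J₀', hJ₁J₁, hJ₁J₁', hone]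
  have hrrc : (r' * r) * (2 + J₁ * J₀ + J₀ * J₁) = 1 := by
    rw [hcfact]
    calc r' * r * ((J₁ * J₀ + 1) * (J₀ * J₁ + 1))
        = r' * ((r * (J₁ * J₀ + 1)) * (J₀ * J₁ + 1)) := by noncomm_ring
      _ = r' * (J₀ * J₁ + 1) := by rw [hru1, one_mul]
      _ = 1 := hr'w1
  have hsT : s * (J₀ * (J₁ * J₀ - 1) * r) = (J₀ * (J₁ * J₀ - 1) * r) * s := by
    calc s * (J₀ * (J₁ * J₀ - 1) * r) = (s * J₀) * ((J₁ * J₀ - 1) * r) := by noncomm_ring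
      _ = (J₀ * s) * ((J₁ * J₀ - 1) * r) := by rw [hJ₀s]
      _ = J₀ * ((s * (J₁ * J₀ - 1)) * r) := by noncomm_ring
      _ = J₀ * (((J₁ * J₀ - 1) * s) * r) := by rw [hsu1]
      _ = J₀ * (J₁ * J₀ - 1) * (s * r) := by noncomm_ring
      _ = J₀ * (J₁ * J₀ - 1) * (r * s) := by rw [hsr]
      _ = (J₀ * (J₁ * J₀ - 1) * r) * s := by noncomm_ring
  have hTT : (J₀ * (J₁ * J₀ - 1) * r) * (J₀ * (J₁ * J₀ - 1) * r)
      = -((J₀ * J₁ - 1) * (J₁ * J₀ - 1)) * (r' * r) := by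
    calc (J₀ * (J₁ * J₀ - 1) * r) * (J₀ * (J₁ * J₀ - 1) * r)
        = J₀ * (J₁ * J₀ - 1) * (r * J₀) * ((J₁ * J₀ - 1) * r) := by noncomm_ring
      _ = J₀ * (J₁ * J₀ - 1) * (J₀ * r') * ((J₁ * J₀ - 1) * r) := by rw [hrJ₀]
      _ = J₀ * ((J₁ * J₀ - 1) * J₀) * ((r' * (J₁ * J₀ - 1)) * r) := by noncomm_ring
      _ = J₀ * (J₀ * (J₀ * J₁ - 1)) * (((J₁ * J₀ - 1) * r') * r) := by rw [hu1J₀, hr'u]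
      _ = (J₀ * J₀) * ((J₀ * J₁ - 1) * (J₁ * J₀ - 1)) * (r' * r) := by noncomm_ring
      _ = -((J₀ * J₁ - 1) * (J₁ * J₀ - 1)) * (r' * r) := by
          rw [hJ₀J₀]; noncomm_ring
  have key : (J₀ * (J₁ * J₀ - 1) * r * s) * (J₀ * (J₁ * J₀ - 1) * r * s)
      = -2 + J₁ * J₀ + J₀ * J₁ := by
    calc (J₀ * (J₁ * J₀ - 1) * r * s) * (J₀ * (J₁ * J₀ - 1) * r * s)
        = (J₀ * (J₁ * J₀ - 1) * r) * (s * (J₀ * (J₁ * J₀ - 1) * r)) * s := by noncomm_ring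
      _ = (J₀ * (J₁ * J₀ - 1) * r) * ((J₀ * (J₁ * J₀ - 1) * r) * s) * s := by rw [hsT]
      _ = ((J₀ * (J₁ * J₀ - 1) * r) * (J₀ * (J₁ * J₀ - 1) * r)) * (s * s) := by noncomm_ring
      _ = (-((J₀ * J₁ - 1) * (J₁ * J₀ - 1)) * (r' * r)) * (2 + J₁ * J₀ + J₀ * J₁) := by
          rw [hTT, hs2]
      _ = -((J₀ * J₁ - 1) * (J₁ * J₀ - 1)) * ((r' * r) * (2 + J₁ * J₀ + J₀ * J₁)) := by
          noncomm_ring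
      _ = -((J₀ * J₁ - 1) * (J₁ * J₀ - 1)) := by rw [hrrc, mul_one]
      _ = -2 + J₁ * J₀ + J₀ * J₁ := by
          noncomm_ring [hJ₀J₀, hJ₀J₀', hJ₁J₁, hJ₁J₁', hone]
  have goal1 : F ^ 2 = (1 / 4 : ℂ) • (-2 + J₁ * J₀ + J₀ * J₁) := by
    rw [hF, sq, smul_mul_smul_comm, key]
    norm_num
  refine ⟨goal1, ?_, ?_⟩
  · rw [goal1]
    have hsq : (J₀ - J₁) ^ 2 = -(2 + J₁ * J₀ + J₀ * J₁) := by
      rw [sq]; noncomm_ring [hJ₀J₀, hJ₁J₁, hone]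
    rw [hsq, smul_neg, neg_neg, eq_comm]
    have h1A : (1 : A) = (1 / 4 : ℂ) • (4 : A) := by
      rw [show (4 : A) = (4 : ℂ) • (1 : A) from by
        rw [← Algebra.algebraMap_eq_smul_one, map_ofNat], smul_smul]
      norm_num
    rw [h1A, ← smul_add]
    congr 1
    have h4' : (4 : A) = 1 + 1 + 1 + 1 := by norm_num
    noncomm_ring [hone, h4']
  · intro κ hκsa hκsq hκ0 hκ1
    have hκκ : κ * κ = -1 := by rw [← sq]; exact hκsq
    have hκu : κ * (J₁ * J₀) = J₁ * (J₀ * κ) := by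
      calc κ * (J₁ * J₀) = (κ * J₁) * J₀ := by rw [mul_assoc]
        _ = -(J₁ * κ) * J₀ := by rw [hκ1]
        _ = -(J₁ * (κ * J₀)) := by noncomm_ring
        _ = -(J₁ * -(J₀ * κ)) := by rw [hκ0]
        _ = J₁ * (J₀ * κ) := by noncomm_ring
    have hκw : κ * (J₀ * J₁) = J₀ * (J₁ * κ) := by
      calc κ * (J₀ * J₁) = (κ * J₀) * J₁ := by rw [mul_assoc]
        _ = -(J₀ * κ) * J₁ := by rw [hκ0]
        _ = -(J₀ * (κ * J₁)) := by noncomm_ring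
        _ = -(J₀ * -(J₁ * κ)) := by rw [hκ1]
        _ = J₀ * (J₁ * κ) := by noncomm_ring
    have hκc : κ * (2 + J₁ * J₀ + J₀ * J₁) = (2 + J₁ * J₀ + J₀ * J₁) * κ := by
      noncomm_ring [hκu, hκw]
    have hκs : κ * s = s * κ := by
      rw [hs]
      refine unitary_conj_sqrt_comm κ _ ?_ ?_ hc0 hκc
      · rw [hκsa, neg_mul, hκκ, neg_neg]
      · rw [hκsa, mul_neg, hκκ, neg_neg]
    have hκu1 : κ * (J₁ * J₀ - 1) = (J₁ * J₀ - 1) * κ := by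
      noncomm_ring [hκu]
    have hκr : κ * r = r * κ := by
      refine comm_ring_inverse ?_ hUu1
      noncomm_ring [hκu]
    have hκM : κ * (J₀ * (J₁ * J₀ - 1) * r * s) = -((J₀ * (J₁ * J₀ - 1) * r * s) * κ) := by
      calc κ * (J₀ * (J₁ * J₀ - 1) * r * s)
          = (κ * J₀) * ((J₁ * J₀ - 1) * (r * s)) := by noncomm_ring
        _ = -(J₀ * κ) * ((J₁ * J₀ - 1) * (r * s)) := by rw [hκ0]
        _ = -(J₀ * ((κ * (J₁ * J₀ - 1)) * (r * s))) := by noncomm_ring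
        _ = -(J₀ * (((J₁ * J₀ - 1) * κ) * (r * s))) := by rw [hκu1]
        _ = -(J₀ * ((J₁ * J₀ - 1) * ((κ * r) * s))) := by noncomm_ring
        _ = -(J₀ * ((J₁ * J₀ - 1) * ((r * κ) * s))) := by rw [hκr]
        _ = -(J₀ * ((J₁ * J₀ - 1) * (r * (κ * s)))) := by noncomm_ring
        _ = -(J₀ * ((J₁ * J₀ - 1) * (r * (s * κ)))) := by rw [hκs]
        _ = -((J₀ * (J₁ * J₀ - 1) * r * s) * κ) := by noncomm_ring
    rw [hF, mul_smul_comm, smul_mul_assoc, hκM, smul_neg]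
end

section
/- Let A be a unital C*-algebra and let a ∈ A be an invertible self-adjoint element. Then the function x ↦ (a² + x²·1)⁻¹ from [0,∞) to A is Bochner integrable, and (2/π)·∫₀^∞ (a² + x²·1)⁻¹ dx = |a|⁻¹, where |a| denotes the positive square root of a² given by the continuous functional calculus. -/
/-!
Write `b = a²`, a strictly positive element. For each `x` the integrand is `f_x(b)` with
`f_x(t) = (t + x²)⁻¹`, and since the spectrum of `b` lies in some `[ε, ∞)` with `ε > 0`, these
functions are dominated on the spectrum by the integrable `(ε + x²)⁻¹`. Hence integration commutes
with the continuous functional calculus, and the claim reduces to the scalar identity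
`∫₀^∞ (t + x²)⁻¹ dx = π / (2√t)`, obtained from `∫₀^∞ (1 + x²)⁻¹ dx = π / 2` by scaling.
-/

open MeasureTheory Set Real

lemma inv_add_sq_eq_inv_mul_inv_one_add_sq {t : ℝ} (ht : 0 < t) (x : ℝ) :
    (t + x ^ 2)⁻¹ = t⁻¹ * (1 + ((√t)⁻¹ * x) ^ 2)⁻¹ := by
  rw [← mul_inv, mul_pow, inv_pow, sq_sqrt ht.le]
  field_simp

lemma integrable_inv_add_sq {t : ℝ} (ht : 0 < t) : Integrable fun x : ℝ ↦ (t + x ^ 2)⁻¹ := by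
  simp_rw [inv_add_sq_eq_inv_mul_inv_one_add_sq ht]
  exact ((integrable_comp_mul_left_iff (fun y : ℝ ↦ (1 + y ^ 2)⁻¹)
    (inv_ne_zero (sqrt_pos.2 ht).ne')).2 integrable_inv_one_add_sq).const_mul _

lemma integral_Ioi_inv_add_sq {t : ℝ} (ht : 0 < t) :
    ∫ x in Ioi 0, (t + x ^ 2)⁻¹ = π / (2 * √t) := by
  have hs : 0 < √t := sqrt_pos.2 ht
  simp_rw [inv_add_sq_eq_inv_mul_inv_one_add_sq ht]
  rw [integral_const_mul, integral_comp_mul_left_Ioi (fun y ↦ (1 + y ^ 2)⁻¹) 0 (inv_pos.2 hs),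
    mul_zero, integral_Ioi_inv_one_add_sq, arctan_zero, sub_zero, smul_eq_mul]
  field_simp
  rw [sq_sqrt ht.le]

lemma norm_inv_add_sq_le {ε t : ℝ} (hε : 0 < ε) (hεt : ε ≤ t) (x : ℝ) :
    ‖(t + x ^ 2)⁻¹‖ ≤ (ε + x ^ 2)⁻¹ := by
  rw [norm_inv, norm_of_nonneg (add_nonneg (hε.le.trans hεt) (sq_nonneg x))]
  gcongr

section CStarAlgebra

variable {A : Type*} [CStarAlgebra A] [PartialOrder A] [StarOrderedRing A] {b : A}

lemma IsStrictlyPositive.exists_pos_forall_le_of_mem_spectrum (hb : IsStrictlyPositive b) :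
    ∃ ε > 0, ∀ t ∈ spectrum ℝ b, ε ≤ t :=
  (spectrum.isCompact b).exists_forall_le' continuousOn_id fun _ ↦ hb.spectrum_pos

lemma ringInverse_add_sq_smul_one_eq_cfc (hb : IsStrictlyPositive b) (x : ℝ) :
    Ring.inverse (b + x ^ 2 • (1 : A)) = cfc (fun t : ℝ ↦ (t + x ^ 2)⁻¹) b := by
  have hpos : ∀ t ∈ spectrum ℝ b, t + x ^ 2 ≠ 0 := fun t ht ↦
    (add_pos_of_pos_of_nonneg (hb.spectrum_pos ht) (sq_nonneg x)).ne'
  rw [cfc_inv _ b hpos, cfc_add .., cfc_id' .., cfc_const .., Algebra.algebraMap_eq_smul_one]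

lemma IsStrictlyPositive.continuousOn_uncurry_inv_add_sq (hb : IsStrictlyPositive b)
    (s : Set ℝ) :
    ContinuousOn (Function.uncurry fun x t : ℝ ↦ (t + x ^ 2)⁻¹) (s ×ˢ spectrum ℝ b) :=
  ContinuousOn.inv₀ (by fun_prop) fun p hp ↦
    (add_pos_of_pos_of_nonneg (hb.spectrum_pos hp.2) (sq_nonneg p.1)).ne'

lemma integrableOn_ringInverse_add_sq_smul_one (hb : IsStrictlyPositive b) :
    IntegrableOn (fun x : ℝ ↦ Ring.inverse (b + x ^ 2 • (1 : A))) (Ici 0) := by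
  obtain ⟨ε, hε, hεb⟩ := hb.exists_pos_forall_le_of_mem_spectrum
  simp_rw [ringInverse_add_sq_smul_one_eq_cfc hb]
  exact integrableOn_cfc measurableSet_Ici _ (fun x ↦ (ε + x ^ 2)⁻¹) b
    (hb.continuousOn_uncurry_inv_add_sq _)
    (ae_of_all _ fun x t ht ↦ norm_inv_add_sq_le hε (hεb t ht) x)
    (integrable_inv_add_sq hε).integrableOn.hasFiniteIntegral

lemma smul_setIntegral_ringInverse_add_sq_smul_one (hb : IsStrictlyPositive b) :
    (2 / π) • ∫ x in Ici (0 : ℝ), Ring.inverse (b + x ^ 2 • (1 : A)) =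
      Ring.inverse (CFC.sqrt b) := by
  obtain ⟨ε, hε, hεb⟩ := hb.exists_pos_forall_le_of_mem_spectrum
  have hsqrt : ∀ t ∈ spectrum ℝ b, √t ≠ 0 := fun t ht ↦ (sqrt_pos.2 (hb.spectrum_pos ht)).ne'
  calc (2 / π) • ∫ x in Ici (0 : ℝ), Ring.inverse (b + x ^ 2 • (1 : A))
      = (2 / π) • cfc (fun t ↦ ∫ x in Ici (0 : ℝ), (t + x ^ 2)⁻¹) b := by
        simp_rw [ringInverse_add_sq_smul_one_eq_cfc hb]
        rw [cfc_setIntegral measurableSet_Ici _ (fun x ↦ (ε + x ^ 2)⁻¹) b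
          (hb.continuousOn_uncurry_inv_add_sq _)
          (ae_of_all _ fun x t ht ↦ norm_inv_add_sq_le hε (hεb t ht) x)
          (integrable_inv_add_sq hε).integrableOn.hasFiniteIntegral]
    _ = (2 / π) • cfc (fun t ↦ π / 2 * (√t)⁻¹) b := by
        refine congrArg _ (cfc_congr fun t ht ↦ ?_)
        rw [integral_Ici_eq_integral_Ioi, integral_Ioi_inv_add_sq (hb.spectrum_pos ht)]
        ring
    _ = cfc (fun t ↦ (√t)⁻¹) b := by
        rw [cfc_const_mul (π / 2) (fun t : ℝ ↦ (√t)⁻¹) b (continuous_sqrt.continuousOn.inv₀ hsqrt),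
          smul_smul, div_mul_div_cancel₀ pi_ne_zero, div_self two_ne_zero, one_smul]
    _ = Ring.inverse (CFC.sqrt b) := by
        rw [cfc_inv _ b hsqrt, CFC.sqrt_eq_real_sqrt b hb.nonneg, cfcₙ_eq_cfc]

end CStarAlgebra

/-- For an invertible self-adjoint element `a` of a unital C*-algebra,
`x ↦ (a² + x²·1)⁻¹` is Bochner integrable on `[0, ∞)` and
`(2/π)·∫₀^∞ (a² + x²·1)⁻¹ dx = |a|⁻¹`, where `|a|` is the positive square root of `a²`. -/
theorem integral_formula_for_abs_inv {A : Type*} [CStarAlgebra A] [PartialOrder A]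
    [StarOrderedRing A]
    (a : A) (hasa : IsSelfAdjoint a) (hau : IsUnit a) :
    IntegrableOn (fun x : ℝ => Ring.inverse (a ^ 2 + x ^ 2 • (1 : A))) (Set.Ici 0) ∧
      ((2 / Real.pi) • ∫ x in Set.Ici (0 : ℝ), Ring.inverse (a ^ 2 + x ^ 2 • (1 : A))) =
        Ring.inverse (CFC.sqrt (a ^ 2)) := by
  have hb : IsStrictlyPositive (a ^ 2) := (hau.pow 2).isStrictlyPositive hasa.sq_nonneg
  exact ⟨integrableOn_ringInverse_add_sq_smul_one hb,
    smul_setIntegral_ringInverse_add_sq_smul_one hb⟩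
end

section
/- Let ℋ be a complex Hilbert space, S a bounded skew-adjoint operator on ℋ (S* = −S), A ⊆ B(ℋ) a norm-closed *-subalgebra, and D ⊆ A a dense *-subalgebra. Assume: (i) for every a ∈ A the commutator aS − Sa is a compact operator; (ii) for every self-adjoint b ∈ D the operator bSb is compact. Then aS is compact for every a ∈ A. -/
open Metric Set ContinuousLinearMap

private lemma norm_sq_le_aux {H : Type*} [NormedAddCommGroup H] [InnerProductSpace ℂ H]
    [CompleteSpace H] (T : H →L[ℂ] H) (u : H) :
    ‖T u‖ ^ 2 ≤ ‖(star T * T) u‖ * ‖u‖ := by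
  have h1 : RCLike.re (inner (𝕜 := ℂ) (T u) (T u)) = ‖T u‖ ^ 2 := inner_self_eq_norm_sq _
  have h2 : inner (𝕜 := ℂ) ((star T * T) u) u = inner (𝕜 := ℂ) (T u) (T u) := by
    rw [ContinuousLinearMap.star_eq_adjoint, ContinuousLinearMap.mul_apply,
      ContinuousLinearMap.adjoint_inner_left]
  calc ‖T u‖ ^ 2 = RCLike.re (inner (𝕜 := ℂ) ((star T * T) u) u) := by rw [h2, h1]
    _ ≤ ‖inner (𝕜 := ℂ) ((star T * T) u) u‖ := RCLike.re_le_norm _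
    _ ≤ ‖(star T * T) u‖ * ‖u‖ := norm_inner_le_norm _ _

private lemma isCompactOperator_of_star_mul_self {H : Type*} [NormedAddCommGroup H]
    [InnerProductSpace ℂ H] [CompleteSpace H] (T : H →L[ℂ] H)
    (h : IsCompactOperator ⇑(star T * T)) : IsCompactOperator ⇑T := by
  rw [isCompactOperator_iff_exists_mem_nhds_isCompact_closure_image]
  refine ⟨closedBall 0 1, closedBall_mem_nhds _ one_pos, ?_⟩
  suffices htb2 : TotallyBounded (⇑T '' closedBall 0 1) by
    exact TotallyBounded.isCompact_of_isClosed htb2.closure isClosed_closure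
  rw [Metric.totallyBounded_iff]
  intro ε hε
  have hK : IsCompactOperator ⇑((star T * T).toLinearMap) := h
  have htb : TotallyBounded ((star T * T).toLinearMap '' closedBall 0 1) :=
    (hK.isCompact_closure_image_closedBall 1).totallyBounded.subset subset_closure
  obtain ⟨t, hts, htf, hcov⟩ := totallyBounded_iff_subset.1 htb
      {p : H × H | dist p.1 p.2 < ε ^ 2 / 2} (dist_mem_uniformity (by positivity))
  choose! g hg1 hg2 using fun y (hy : y ∈ t) => hts hy
  refine ⟨(⇑T ∘ g) '' t, htf.image _, ?_⟩
  rintro _ ⟨x, hx, rfl⟩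
  obtain ⟨y, hy, hdy⟩ := mem_iUnion₂.1 (hcov (mem_image_of_mem _ hx))
  obtain ⟨hgB, hgK⟩ := And.intro (hg1 y hy) (hg2 y hy)
  refine mem_iUnion₂.2 ⟨T (g y), mem_image_of_mem _ hy, ?_⟩
  have hdist : ‖(star T * T) x - (star T * T) (g y)‖ < ε ^ 2 / 2 := by
    have h' : dist ((star T * T).toLinearMap x) ((star T * T).toLinearMap (g y)) < ε ^ 2 / 2 := by
      rw [hgK]; exact hdy
    simpa [dist_eq_norm] using h'
  have hxg : ‖x - g y‖ ≤ 2 := by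
    have hx1 : ‖x‖ ≤ 1 := mem_closedBall_zero_iff.1 hx
    have hg1' : ‖g y‖ ≤ 1 := mem_closedBall_zero_iff.1 hgB
    calc ‖x - g y‖ ≤ ‖x‖ + ‖g y‖ := norm_sub_le _ _
      _ ≤ 2 := by linarith
  have key : ‖T x - T (g y)‖ ^ 2 < ε ^ 2 := by
    have h1 : ‖T (x - g y)‖ ^ 2 ≤ ‖(star T * T) (x - g y)‖ * ‖x - g y‖ :=
      norm_sq_le_aux T _
    have h2 : ‖(star T * T) (x - g y)‖ * ‖x - g y‖ ≤ ‖(star T * T) (x - g y)‖ * 2 :=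
      mul_le_mul_of_nonneg_left hxg (norm_nonneg _)
    have h3 : ‖(star T * T) (x - g y)‖ * 2 < (ε ^ 2 / 2) * 2 := by
      have : ‖(star T * T) (x - g y)‖ < ε ^ 2 / 2 := by
        simpa [map_sub] using hdist
      linarith
    have h4 : ‖T (x - g y)‖ = ‖T x - T (g y)‖ := by rw [map_sub]
    nlinarith [norm_nonneg (T x - T (g y))]
  rw [mem_ball, dist_eq_norm]
  have := lt_of_pow_lt_pow_left₀ 2 hε.le key
  exact this

/-- Let `S` be a bounded skew-adjoint operator on a complex Hilbert space,
`A` a norm-closed *-subalgebra of the bounded operators and `D ⊆ A` a dense *-subalgebra.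
If every `a ∈ A` has compact commutator with `S` and `bSb` is compact for every
self-adjoint `b ∈ D`, then `aS` is compact for every `a ∈ A`. -/
theorem locally_compact_of_dense_local_compactness {H : Type*} [NormedAddCommGroup H]
    [InnerProductSpace ℂ H] [CompleteSpace H]
    (S : H →L[ℂ] H) (hS : star S = -S)
    (A D : StarSubalgebra ℂ (H →L[ℂ] H)) (hA : IsClosed (A : Set (H →L[ℂ] H)))
    (hDA : D ≤ A) (hdense : (A : Set (H →L[ℂ] H)) ⊆ closure (D : Set (H →L[ℂ] H)))
    (hcomm : ∀ a ∈ A, IsCompactOperator ⇑(a * S - S * a))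
    (hlocal : ∀ b ∈ D, IsSelfAdjoint b → IsCompactOperator ⇑(b * S * b)) :
    ∀ a ∈ A, IsCompactOperator ⇑(a * S) := by
  -- Step 1: for self-adjoint b ∈ D, b * S is compact.
  have key : ∀ b ∈ D, IsSelfAdjoint b → IsCompactOperator ⇑(b * S) := by
    intro b hb hsa
    have hc : IsCompactOperator ⇑(b * S - S * b) := hcomm b (hDA hb)
    have hSb : IsCompactOperator ⇑(S * b) := by
      apply isCompactOperator_of_star_mul_self
      have e : star (S * b) * (S * b) = -(S * (b * S * b)) - (b * S - S * b) * (S * b) := by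
        rw [star_mul, hS, hsa.star_eq]; noncomm_ring
      rw [e]
      have h1 : IsCompactOperator ⇑(S * (b * S * b)) := (hlocal b hb hsa).clm_comp S
      have h2 : IsCompactOperator ⇑((b * S - S * b) * (S * b)) := hc.comp_clm (S * b)
      exact h1.neg.sub h2
    have e2 : b * S = (b * S - S * b) + S * b := by noncomm_ring
    rw [e2]
    exact hc.add hSb
  -- Step 2: for all d ∈ D, d * S is compact.
  have keyD : ∀ d ∈ D, IsCompactOperator ⇑(d * S) := by
    intro d hd
    have hx'D : d + star d ∈ D := add_mem hd (star_mem hd)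
    have hy'D : Complex.I • (d - star d) ∈ D :=
      SMulMemClass.smul_mem _ (sub_mem hd (star_mem hd))
    have hx' : IsSelfAdjoint (d + star d) := by
      simp [IsSelfAdjoint, star_add, star_star, add_comm]
    have hy' : IsSelfAdjoint (Complex.I • (d - star d)) := by
      simp only [IsSelfAdjoint, star_smul, star_sub, star_star, Complex.star_def,
        Complex.conj_I]
      module
    have e3 : d * S = (2⁻¹ : ℂ) • ((d + star d) * S)
        + (-(2⁻¹ : ℂ) * Complex.I) • ((Complex.I • (d - star d)) * S) := by
      rw [smul_mul_assoc, smul_smul, mul_assoc, Complex.I_mul_I, mul_neg_one, neg_neg,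
        add_mul, sub_mul]
      module
    rw [e3]
    exact ((key _ hx'D hx').smul _).add ((key _ hy'D hy').smul _)
  -- Step 3: density.
  intro a ha
  have hcont : Continuous (fun f : H →L[ℂ] H => f * S) := continuous_mul_right S
  have hsub : (fun f : H →L[ℂ] H => f * S) '' (D : Set (H →L[ℂ] H))
      ⊆ {f : H →L[ℂ] H | IsCompactOperator f} := by
    rintro _ ⟨d, hd, rfl⟩
    exact keyD d hd
  have hmem : a * S ∈ closure ((fun f : H →L[ℂ] H => f * S) '' (D : Set (H →L[ℂ] H))) :=
    image_closure_subset_closure_image hcont ⟨a, hdense ha, rfl⟩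
  exact closure_minimal hsub isClosed_setOf_isCompactOperator hmem
end

section
/- Let ℋ be a complex Hilbert space, let J₀, J₁ be bounded skew-adjoint unitaries on ℋ with J₁ − J₀ invertible, and define F := ½·J₀(J₁J₀−1)(J₁J₀+1)⁻¹·s, where s is the positive square root of 2 + J₁J₀ + J₀J₁. If a is a bounded operator on ℋ such that aJ₀ − J₀a and aJ₁ − J₁a are compact, then aF − Fa is compact. -/
/-!
The operators `x` with `[a, x]` compact form a closed subalgebra of `B(H)`: the commutator
with `a` is a derivation and the compact operators form a closed two-sided ideal. It is closed
under inversion because `[a, u⁻¹] = -u⁻¹ [a, u] u⁻¹`, and, being closed, it contains the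
continuous functional calculus of each of its self-adjoint elements, in particular the square
root `s`. Since `J₀` and `J₁` lie in it, so does `F`.
-/

section CompactCommutant

variable {𝕜 E : Type*} [NontriviallyNormedField 𝕜] [NormedAddCommGroup E] [NormedSpace 𝕜 E]

def compactCommutant (a : E →L[𝕜] E) : Subalgebra 𝕜 (E →L[𝕜] E) where
  carrier := {x | IsCompactOperator (a * x - x * a)}
  mul_mem' {x y} hx hy := by
    have h : a * (x * y) - x * y * a = (a * x - x * a) * y + x * (a * y - y * a) := by
      noncomm_ring
    show IsCompactOperator _
    rw [h]
    exact (hx.comp_clm y).add (hy.clm_comp x)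
  add_mem' {x y} hx hy := by
    have h : a * (x + y) - (x + y) * a = (a * x - x * a) + (a * y - y * a) := by noncomm_ring
    show IsCompactOperator _
    rw [h]
    exact hx.add hy
  algebraMap_mem' c := by
    show IsCompactOperator _
    rw [Algebra.commutes, sub_self]
    exact isCompactOperator_zero

theorem mem_compactCommutant {a x : E →L[𝕜] E} :
    x ∈ compactCommutant a ↔ IsCompactOperator (a * x - x * a) := Iff.rfl

theorem isClosed_compactCommutant [CompleteSpace E] (a : E →L[𝕜] E) :
    IsClosed (compactCommutant a : Set (E →L[𝕜] E)) :=
  isClosed_setOfPred_isCompactOperator.preimage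
    ((continuous_const.mul continuous_id).sub (continuous_id.mul continuous_const))

theorem Ring.inverse_mem_compactCommutant {a u : E →L[𝕜] E} (hu : u ∈ compactCommutant a) :
    Ring.inverse u ∈ compactCommutant a := by
  by_cases hunit : IsUnit u
  · set w := Ring.inverse u
    have h : a * w - w * a = -(w * (a * u - u * a) * w) := by
      calc a * w - w * a = w * u * (a * w) - w * a * (u * w) := by
            rw [Ring.inverse_mul_cancel u hunit, Ring.mul_inverse_cancel u hunit, one_mul, mul_one]
        _ = -(w * (a * u - u * a) * w) := by noncomm_ring
    rw [mem_compactCommutant, h]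
    exact ((hu.comp_clm w).clm_comp w).neg
  · rw [Ring.inverse_non_unit u hunit]
    exact zero_mem _

end CompactCommutant

theorem StarAlgebra.elemental_toSubalgebra_of_isSelfAdjoint {R A : Type*} [CommSemiring R]
    [StarRing R] [TopologicalSpace A] [Semiring A] [StarRing A] [IsSemitopologicalSemiring A]
    [ContinuousStar A] [Algebra R A] [StarModule R A] {x : A} (hx : IsSelfAdjoint x) :
    (StarAlgebra.elemental R x).toSubalgebra = Algebra.elemental R x := by
  rw [StarAlgebra.elemental, StarSubalgebra.topologicalClosure_toSubalgebra_comm,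
    StarAlgebra.adjoin_toSubalgebra, Set.star_singleton, hx.star_eq, Set.union_self]
  rfl

section ClosedSubalgebra

variable {A : Type*} [CStarAlgebra A] {S : Subalgebra ℝ A}

theorem Subalgebra.cfc_mem_of_isClosed (hS : IsClosed (S : Set A)) (f : ℝ → ℝ) {x : A}
    (hx : x ∈ S) : cfc f x ∈ S := by
  by_cases hsa : IsSelfAdjoint x
  · have hf : cfc f x ∈ Algebra.elemental ℝ x :=
      StarAlgebra.elemental_toSubalgebra_of_isSelfAdjoint (R := ℝ) hsa ▸ cfc_mem_elemental f x
    exact Algebra.elemental.le_of_mem hS hx hf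
  · rw [cfc_apply_of_not_predicate x hsa]
    exact zero_mem S

theorem Subalgebra.sqrt_mem_of_isClosed [PartialOrder A] [StarOrderedRing A]
    (hS : IsClosed (S : Set A)) {x : A} (hx : x ∈ S) : CFC.sqrt x ∈ S := by
  by_cases hx₀ : 0 ≤ x
  · rw [CFC.sqrt_eq_cfc, cfc_nnreal_eq_real _ x]
    exact S.cfc_mem_of_isClosed hS _ hx
  · rw [CFC.sqrt_of_not_nonneg hx₀]
    exact zero_mem S

end ClosedSubalgebra

theorem bounded_transform_compact_commutator_general {H : Type*} [NormedAddCommGroup H]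
    [InnerProductSpace ℂ H] [CompleteSpace H] (J₀ J₁ : H →L[ℂ] H)
    (s : H →L[ℂ] H) (hs : s = CFC.sqrt (2 + J₁ * J₀ + J₀ * J₁))
    (F : H →L[ℂ] H)
    (hF : F = (1 / 2 : ℂ) • (J₀ * (J₁ * J₀ - 1) * Ring.inverse (J₁ * J₀ + 1) * s))
    (a : H →L[ℂ] H)
    (ha₀ : IsCompactOperator ⇑(a * J₀ - J₀ * a))
    (ha₁ : IsCompactOperator ⇑(a * J₁ - J₁ * a)) :
    IsCompactOperator ⇑(a * F - F * a) := by
  set S := compactCommutant a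
  have hJ₀ : J₀ ∈ S := ha₀
  have hJ₁ : J₁ ∈ S := ha₁
  have hJ₁J₀ : J₁ * J₀ ∈ S := mul_mem hJ₁ hJ₀
  have hT : 2 + J₁ * J₀ + J₀ * J₁ ∈ S := add_mem (add_mem (ofNat_mem _ 2) hJ₁J₀) (mul_mem hJ₀ hJ₁)
  have hsS : s ∈ S :=
    hs ▸ (S.restrictScalars ℝ).sqrt_mem_of_isClosed (isClosed_compactCommutant a) hT
  have hinv : Ring.inverse (J₁ * J₀ + 1) ∈ S :=
    Ring.inverse_mem_compactCommutant (add_mem hJ₁J₀ (one_mem S))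
  rw [← mem_compactCommutant, hF]
  exact S.smul_mem (mul_mem (mul_mem (mul_mem hJ₀ (sub_mem hJ₁J₀ (one_mem S))) hinv) hsS) _

/-- For bounded skew-adjoint unitaries `J₀, J₁` on a complex Hilbert space
with `J₁ − J₀` invertible, let `F = ½ J₀(J₁J₀−1)(J₁J₀+1)⁻¹ s` with `s` the positive
square root of `2 + J₁J₀ + J₀J₁`. If `a` has compact commutators with `J₀` and `J₁`,
then `[a, F]` is compact. -/
theorem bounded_transform_compact_commutator {H : Type*} [NormedAddCommGroup H]
    [InnerProductSpace ℂ H] [CompleteSpace H] (J₀ J₁ : H →L[ℂ] H)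
    (hJ₀sa : star J₀ = -J₀) (hJ₀sq : J₀ ^ 2 = -1)
    (hJ₁sa : star J₁ = -J₁) (hJ₁sq : J₁ ^ 2 = -1)
    (hinv : IsUnit (J₁ - J₀))
    (s : H →L[ℂ] H) (hs : s = CFC.sqrt (2 + J₁ * J₀ + J₀ * J₁))
    (F : H →L[ℂ] H)
    (hF : F = (1 / 2 : ℂ) • (J₀ * (J₁ * J₀ - 1) * Ring.inverse (J₁ * J₀ + 1) * s))
    (a : H →L[ℂ] H)
    (ha₀ : IsCompactOperator ⇑(a * J₀ - J₀ * a))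
    (ha₁ : IsCompactOperator ⇑(a * J₁ - J₁ * a)) :
    IsCompactOperator ⇑(a * F - F * a) :=
  bounded_transform_compact_commutator_general J₀ J₁ s hs F hF a ha₀ ha₁
end
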